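/- Fix α ∈ ℝ with −1 < α < 1/2 and an integer m ≥ 2. Define s_n^{(2m)} = (n/(1−2α))^m·(2m−1)!!, h_n^{(2m)} = (1/s_{n+1}^{(2m)})·(1 + ∑_{ℓ=1}^{m}{C(2m,2ℓ) + (α/n)C(2m,2ℓ−1)}·s_n^{(2ℓ)}) − 1, g_n^{(2m)} = (n/(n+1))^m·(1 + 2mα/n), j_0 = j_0(2mα) where j_0(δ) = k if δ = −k for some k ∈ ℕ and 0 otherwise, ḡ_n^{(2m)} = ∏_{j=j_0+1}^{n−1} g_j^{(2m)}, and H_n^{(2m)} = ḡ_n^{(2m)}·∑_{j=j_0+1}^{n−1} h_j^{(2m)}/ḡ_{j+1}^{(2m)}. Then: (i) if −1 < α ≤ 0, H_n^{(2m)} is asymptotically equivalent to ((1−4α)·c_{2m}/(m(1−2α)−1))·n^{−1} as n → ∞, where c_{2m} = (m(m−1)/2)·c(α) and c(α) = −2(2α²+1)/(3(1−4α)); (ii) if 0 < α < 1/2, then H_n^{(2m)} = o(n^{−(1−2α)}) as n → ∞. -/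

import Mathlib

open Filter Asymptotics

noncomputable section
open scoped Classical

/-- `j₀(δ) = k` if `δ = -k` for some `k ∈ {1,2,…}`, and `j₀(δ) = 0` otherwise. -/
def j0 (δ : ℝ) : ℕ :=
  if h : ∃ k : ℕ, 1 ≤ k ∧ δ = -(k : ℝ) then h.choose else 0

/-- `s_n^{(2ℓ)} = (n/(1-2α))^ℓ · (2ℓ-1)!!`. -/
def sSeq (α : ℝ) (ℓ n : ℕ) : ℝ :=
  ((n : ℝ) / (1 - 2 * α)) ^ ℓ * ∏ j ∈ Finset.range ℓ, (2 * (j : ℝ) + 1)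

/-- `h_n^{(2m)} = (1/s_{n+1}^{(2m)})(1 + ∑_{ℓ=1}^m {C(2m,2ℓ) + (α/n)C(2m,2ℓ-1)} s_n^{(2ℓ)}) - 1`. -/
def hSeq (α : ℝ) (m n : ℕ) : ℝ :=
  (1 / sSeq α m (n + 1)) *
      (1 + ∑ ℓ ∈ Finset.Icc 1 m,
        (((2 * m).choose (2 * ℓ) : ℝ) + α / (n : ℝ) * ((2 * m).choose (2 * ℓ - 1) : ℝ)) *
          sSeq α ℓ n) - 1

/-- `g_n^{(2m)} = (n/(n+1))^m (1 + 2mα/n)`. -/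
def gSeq (α : ℝ) (m n : ℕ) : ℝ :=
  ((n : ℝ) / ((n : ℝ) + 1)) ^ m * (1 + 2 * (m : ℝ) * α / (n : ℝ))

/-- `ḡ_n^{(2m)} = ∏_{j=j₀+1}^{n-1} g_j^{(2m)}` with `j₀ = j₀(2mα)`. -/
def gBar (α : ℝ) (m n : ℕ) : ℝ :=
  ∏ j ∈ Finset.Ico (j0 (2 * (m : ℝ) * α) + 1) n, gSeq α m j

/-- `H_n^{(2m)} = ḡ_n^{(2m)} ∑_{j=j₀+1}^{n-1} h_j^{(2m)}/ḡ_{j+1}^{(2m)}`. -/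
def HSeq (α : ℝ) (m n : ℕ) : ℝ :=
  gBar α m n * ∑ j ∈ Finset.Ico (j0 (2 * (m : ℝ) * α) + 1) n, hSeq α m j / gBar α m (j + 1)

namespace S16
open Finset Topology


def DD (ℓ : ℕ) : ℝ := ∏ j ∈ Finset.range ℓ, (2 * (j : ℝ) + 1)

lemma DD_pos (ℓ : ℕ) : 0 < DD ℓ := Finset.prod_pos (fun j _ => by positivity)

lemma DD_ne (ℓ : ℕ) : DD ℓ ≠ 0 := (DD_pos ℓ).ne'

lemma DD_succ (ℓ : ℕ) : DD (ℓ+1) = DD ℓ * (2*ℓ+1) := Finset.prod_range_succ _ _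

def dd (m ℓ : ℕ) : ℝ := ((2 * m).choose (2 * ℓ) : ℝ) * DD ℓ / DD m
def ee (m ℓ : ℕ) : ℝ := ((2 * m).choose (2 * ℓ - 1) : ℝ) * DD ℓ / DD m

def BB (α : ℝ) (m k : ℕ) : ℝ :=
  dd m (m - k) * (1 - 2*α)^k +
    (if k = 0 then 0 else α * ee m (m - k + 1) * (1 - 2*α)^(k-1)) - (m.choose k : ℝ)

lemma factorial_add2 (n : ℕ) : (n+2).factorial = (n+2)*((n+1)*n.factorial) := by
  rw [show n+2 = n+1+1 by omega, Nat.factorial_succ, Nat.factorial_succ]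

lemma factorial_add3 (n : ℕ) : (n+3).factorial = (n+3)*((n+2)*((n+1)*n.factorial)) := by
  rw [show n+3 = n+2+1 by omega, Nat.factorial_succ, factorial_add2]

lemma factorial_add4 (n : ℕ) : (n+4).factorial = (n+4)*((n+3)*((n+2)*((n+1)*n.factorial))) := by
  rw [show n+4 = n+3+1 by omega, Nat.factorial_succ, factorial_add3]

lemma choose_two (n : ℕ) : (((n+2).choose 2 : ℕ) : ℝ) = (n+2)*(n+1)/2 := by
  rw [Nat.cast_choose ℝ (by omega : 2 ≤ n+2), show n+2-2 = n by omega, factorial_add2]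
  have h : ((2:ℕ).factorial : ℝ) = 2 := by norm_num [Nat.factorial]
  have hn : ((n.factorial : ℕ) : ℝ) ≠ 0 := Nat.cast_ne_zero.mpr n.factorial_ne_zero
  push_cast [h]
  field_simp

lemma choose_three (n : ℕ) : (((n+3).choose 3 : ℕ) : ℝ) = (n+3)*(n+2)*(n+1)/6 := by
  rw [Nat.cast_choose ℝ (by omega : 3 ≤ n+3), show n+3-3 = n by omega, factorial_add3]
  have h : ((3:ℕ).factorial : ℝ) = 6 := by norm_num [Nat.factorial]
  have hn : ((n.factorial : ℕ) : ℝ) ≠ 0 := Nat.cast_ne_zero.mpr n.factorial_ne_zero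
  push_cast [h]
  field_simp

lemma choose_four (n : ℕ) : (((n+4).choose 4 : ℕ) : ℝ) = (n+4)*(n+3)*(n+2)*(n+1)/24 := by
  rw [Nat.cast_choose ℝ (by omega : 4 ≤ n+4), show n+4-4 = n by omega, factorial_add4]
  have h : ((4:ℕ).factorial : ℝ) = 24 := by norm_num [Nat.factorial]
  have hn : ((n.factorial : ℕ) : ℝ) ≠ 0 := Nat.cast_ne_zero.mpr n.factorial_ne_zero
  push_cast [h]
  field_simp


lemma DD_add1 (q : ℕ) : DD (q+1) = DD q * (2*(q:ℝ)+1) := DD_succ q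

lemma DD_add2 (q : ℕ) : DD (q+2) = DD q * ((2*(q:ℝ)+1)*(2*(q:ℝ)+3)) := by
  rw [show q+2 = (q+1)+1 by omega, DD_succ, DD_succ]; push_cast; ring

lemma choose_flip (n k j : ℕ) (h : k + j = n) : n.choose k = n.choose j := by
  have hk : k = n - j := by omega
  subst hk; exact Nat.choose_symm (by omega)

lemma BB0 (α : ℝ) (m : ℕ) : BB α m 0 = 0 := by
  simp [BB, dd, Nat.choose_self, div_self (DD_ne m)]

lemma dd_q1 (q : ℕ) : dd (q+2) (q+1) = (q+2 : ℝ) := by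
  unfold dd
  rw [show 2*(q+2) = 2*q+4 by ring, show 2*(q+1) = 2*q+2 by ring,
      choose_flip (2*q+4) (2*q+2) 2 (by ring), show 2*q+4 = (2*q+2)+2 by ring,
      choose_two (2*q+2)]
  rw [DD_add2, DD_add1]
  have h1 : DD q ≠ 0 := DD_ne _
  have h2 : (2*(q:ℝ)+1) ≠ 0 := by positivity
  have h3 : (2*(q:ℝ)+3) ≠ 0 := by positivity
  push_cast
  field_simp
  ring

lemma ee_q2 (q : ℕ) : ee (q+2) (q+2) = (2*q+4 : ℝ) := by
  unfold ee
  rw [show 2*(q+2)-1 = 2*q+3 by omega, show 2*(q+2) = 2*q+4 by ring,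
      choose_flip (2*q+4) (2*q+3) 1 (by ring),
      Nat.choose_one_right, mul_div_assoc, div_self (DD_ne _), mul_one]
  push_cast; ring

lemma BB1 (α : ℝ) (q : ℕ) : BB α (q+2) 1 = 0 := by
  unfold BB
  rw [show q+2-1 = q+1 by omega, if_neg one_ne_zero, show q+1+1 = q+2 by omega,
      dd_q1, ee_q2, Nat.choose_one_right]
  push_cast
  ring

lemma dd_q0 (q : ℕ) : dd (q+2) q = ((q:ℝ)+2)*((q:ℝ)+1)/6 := by
  unfold dd
  rw [show 2*(q+2) = 2*q+4 by ring, choose_flip (2*q+4) (2*q) 4 (by ring),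
      show 2*q+4 = (2*q)+4 by ring, choose_four (2*q)]
  rw [show q+2 = (q+1)+1 by omega, DD_succ, DD_succ]
  have h1 : DD q ≠ 0 := DD_ne _
  have h2 : (2*(q:ℝ)+1) ≠ 0 := by positivity
  have h3 : (2*((q:ℝ)+1)+1) ≠ 0 := by positivity
  push_cast
  field_simp
  ring

lemma ee_q1 (q : ℕ) : ee (q+2) (q+1) = 2*((q:ℝ)+2)*((q:ℝ)+1)/3 := by
  unfold ee
  rw [show 2*(q+1)-1 = 2*q+1 by omega, show 2*(q+2) = (2*q+1)+3 by ring,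
      choose_flip ((2*q+1)+3) (2*q+1) 3 (by omega), choose_three (2*q+1)]
  rw [DD_add2, DD_add1]
  have h1 : DD q ≠ 0 := DD_ne _
  have h2 : (2*(q:ℝ)+1) ≠ 0 := by positivity
  have h3 : (2*(q:ℝ)+3) ≠ 0 := by positivity
  push_cast
  field_simp
  ring

lemma BB2 (α : ℝ) (q : ℕ) :
    BB α (q+2) 2 = -(((q:ℝ)+2)*((q:ℝ)+1)) * (2*α^2+1)/3 := by
  unfold BB
  rw [show q+2-2 = q by omega, if_neg two_ne_zero, show q+1 = q+1 by rfl,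
      dd_q0, ee_q1, choose_two q]
  have h2 : (2*(q:ℝ)+1) ≠ 0 := by positivity
  have h3 : (2*(q:ℝ)+3) ≠ 0 := by positivity
  push_cast
  field_simp
  ring


lemma key1 (α : ℝ) (q : ℕ) (x : ℝ) :
    (∑ ℓ ∈ range (q+3), dd (q+2) ℓ * ((1-2*α)*x)^(q+2-ℓ))
      + α * x * (∑ ℓ ∈ Finset.Icc 1 (q+2), ee (q+2) ℓ * ((1-2*α)*x)^(q+2-ℓ))
      - (1+x)^(q+2)
    = x^2 * ∑ i ∈ range (q+1), BB α (q+2) (i+2) * x^i := by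
  set c : ℝ := 1 - 2*α with hc
  have h1 : (∑ ℓ ∈ range (q+3), dd (q+2) ℓ * (c*x)^(q+2-ℓ))
      = ∑ k ∈ range (q+3), dd (q+2) (q+2-k) * c^k * x^k := by
    rw [← Finset.sum_range_reflect]
    refine sum_congr rfl fun k hk => ?_
    rw [mem_range] at hk
    rw [show q+2 - (q+3-1-k) = k by omega, show q+3-1-k = q+2-k by omega, mul_pow]
    ring
  have h2 : (∑ ℓ ∈ Finset.Icc 1 (q+2), ee (q+2) ℓ * (c*x)^(q+2-ℓ))
      = ∑ k ∈ range (q+2), ee (q+2) (q+2-k) * c^k * x^k := by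
    rw [← Finset.Ico_add_one_right_eq_Icc, Finset.sum_Ico_eq_sum_range]
    rw [show q+2+1-1 = q+2 by omega]
    rw [← Finset.sum_range_reflect]
    refine sum_congr rfl fun k hk => ?_
    rw [mem_range] at hk
    rw [show 1 + (q+2-1-k) = q+2-k by omega, show q+2-(q+2-k) = k by omega, mul_pow]
    ring
  have h3 : (1+x)^(q+2) = ∑ k ∈ range (q+3), ((q+2).choose k : ℝ) * x^k := by
    rw [add_comm (1:ℝ) x, add_pow]
    refine sum_congr rfl fun k hk => by rw [one_pow]; ring
  rw [h1, h2, h3]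
  have h4 : α * x * (∑ k ∈ range (q+2), ee (q+2) (q+2-k) * c^k * x^k)
      = ∑ k ∈ range (q+3),
          (if k = 0 then 0 else α * ee (q+2) (q+2-k+1) * c^(k-1)) * x^k := by
    rw [Finset.sum_range_succ'
      (fun k => (if k = 0 then 0 else α * ee (q+2) (q+2-k+1) * c^(k-1)) * x^k) (q+2),
      Finset.mul_sum]
    have he : ∀ k ∈ range (q+2), α*x*(ee (q+2) (q+2-k) * c^k * x^k)
        = (if k+1 = 0 then 0 else α * ee (q+2) (q+2-(k+1)+1) * c^(k+1-1)) * x^(k+1) := by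
      intro k hk
      rw [mem_range] at hk
      rw [if_neg (Nat.succ_ne_zero k), show q+2-(k+1)+1 = q+2-k by omega,
        show k+1-1 = k by omega]
      ring
    rw [Finset.sum_congr rfl he]
    simp
  rw [h4, ← Finset.sum_add_distrib, ← Finset.sum_sub_distrib]
  have h5 : ∀ k ∈ range (q+3),
      dd (q+2) (q+2-k) * c^k * x^k
        + (if k = 0 then 0 else α * ee (q+2) (q+2-k+1) * c^(k-1)) * x^k
        - ((q+2).choose k : ℝ) * x^k = BB α (q+2) k * x^k := by
    intro k hk
    rw [BB]
    ring
  rw [Finset.sum_congr rfl h5]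
  rw [Finset.sum_range_succ' (fun k => BB α (q+2) k * x^k) (q+2),
      Finset.sum_range_succ' (fun k => BB α (q+2) (k+1) * x^(k+1)) (q+1)]
  rw [BB0, BB1]
  rw [Finset.mul_sum]
  simp only [zero_mul, add_zero, mul_zero]
  refine sum_congr rfl fun k hk => ?_
  ring

lemma sSeq_def (α : ℝ) (ℓ k : ℕ) : sSeq α ℓ k = ((k:ℝ)/(1-2*α))^ℓ * DD ℓ := rfl

lemma DD0 : DD 0 = 1 := by simp [DD]

lemma hsum_split (q : ℕ) (f : ℕ → ℝ) :
    ∑ ℓ ∈ range (q+3), f ℓ = f 0 + ∑ ℓ ∈ Finset.Icc 1 (q+2), f ℓ := by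
  rw [← Finset.Ico_add_one_right_eq_Icc, Finset.sum_Ico_eq_sum_range, show q+2+1-1 = q+2 by omega,
      Finset.sum_range_succ' f (q+2), add_comm]
  congr 1
  exact Finset.sum_congr rfl fun k _ => by rw [Nat.add_comm]

lemma hSeq_eq (α : ℝ) (hα₂ : α < 1/2) (q n : ℕ) (hn : 1 ≤ n) :
    hSeq α (q+2) n = ((n:ℝ)/((n:ℝ)+1))^(q+2) *
      (((n:ℝ)⁻¹)^2 * ∑ i ∈ range (q+1), BB α (q+2) (i+2) * ((n:ℝ)⁻¹)^i) := by
  have hnp : (0:ℝ) < (n:ℝ) := by exact_mod_cast hn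
  have hn0 : (n:ℝ) ≠ 0 := hnp.ne'
  have hn1 : (n:ℝ) + 1 ≠ 0 := by positivity
  have hc : (0:ℝ) < 1 - 2*α := by linarith
  have hc0 : (1:ℝ) - 2*α ≠ 0 := hc.ne'
  have hhead : 1/sSeq α (q+2) (n+1)
      = ((n:ℝ)/((n:ℝ)+1))^(q+2) * (dd (q+2) 0 * ((1-2*α)*(n:ℝ)⁻¹)^(q+2-0)) := by
    rw [sSeq_def]
    unfold dd
    rw [Nat.mul_zero, Nat.choose_zero_right, DD0, Nat.sub_zero]
    have hD := DD_ne (q+2)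
    push_cast
    rw [div_pow, div_pow, mul_pow, inv_pow]
    field_simp
  have hterm : ∀ ℓ ∈ Finset.Icc 1 (q+2),
      1/sSeq α (q+2) (n+1) *
        ((((2*(q+2)).choose (2*ℓ) : ℝ) + α/(n:ℝ) * ((2*(q+2)).choose (2*ℓ-1) : ℝ)) * sSeq α ℓ n)
      = ((n:ℝ)/((n:ℝ)+1))^(q+2) * (dd (q+2) ℓ * ((1-2*α)*(n:ℝ)⁻¹)^(q+2-ℓ))
        + ((n:ℝ)/((n:ℝ)+1))^(q+2) * (α*(n:ℝ)⁻¹*(ee (q+2) ℓ * ((1-2*α)*(n:ℝ)⁻¹)^(q+2-ℓ))) := by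
    intro ℓ hℓ
    rw [Finset.mem_Icc] at hℓ
    obtain ⟨k, hk⟩ : ∃ k, q + 2 = ℓ + k := ⟨q+2-ℓ, by omega⟩
    rw [show q+2-ℓ = k by omega]
    unfold dd ee
    rw [hk]
    rw [sSeq_def, sSeq_def]
    have hD := DD_ne (ℓ+k)
    have hDl := DD_ne ℓ
    push_cast
    simp only [div_pow, mul_pow, inv_pow, pow_add]
    field_simp
  have key : hSeq α (q+2) n + 1
      = ((n:ℝ)/((n:ℝ)+1))^(q+2) *
        ((∑ ℓ ∈ range (q+3), dd (q+2) ℓ * ((1-2*α)*(n:ℝ)⁻¹)^(q+2-ℓ))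
          + α * (n:ℝ)⁻¹ *
            (∑ ℓ ∈ Finset.Icc 1 (q+2), ee (q+2) ℓ * ((1-2*α)*(n:ℝ)⁻¹)^(q+2-ℓ))) := by
    calc hSeq α (q+2) n + 1
        = 1/sSeq α (q+2) (n+1)
          + ∑ ℓ ∈ Finset.Icc 1 (q+2), (1/sSeq α (q+2) (n+1) *
              ((((2*(q+2)).choose (2*ℓ) : ℝ) + α/(n:ℝ) * ((2*(q+2)).choose (2*ℓ-1) : ℝ))
                * sSeq α ℓ n)) := by
          unfold hSeq
          rw [mul_add, mul_one, Finset.mul_sum]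
          ring
      _ = ((n:ℝ)/((n:ℝ)+1))^(q+2) * (dd (q+2) 0 * ((1-2*α)*(n:ℝ)⁻¹)^(q+2-0))
          + ∑ ℓ ∈ Finset.Icc 1 (q+2),
              (((n:ℝ)/((n:ℝ)+1))^(q+2) * (dd (q+2) ℓ * ((1-2*α)*(n:ℝ)⁻¹)^(q+2-ℓ))
                + ((n:ℝ)/((n:ℝ)+1))^(q+2) *
                    (α*(n:ℝ)⁻¹*(ee (q+2) ℓ * ((1-2*α)*(n:ℝ)⁻¹)^(q+2-ℓ)))) := by
          rw [Finset.sum_congr rfl hterm, hhead]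
      _ = _ := by
          rw [hsum_split q (fun ℓ => dd (q+2) ℓ * ((1-2*α)*(n:ℝ)⁻¹)^(q+2-ℓ)),
              Finset.sum_add_distrib, ← Finset.mul_sum, ← Finset.mul_sum, ← Finset.mul_sum]
          ring
  have hone : ((n:ℝ)/((n:ℝ)+1))^(q+2) * (1+(n:ℝ)⁻¹)^(q+2) = 1 := by
    rw [← mul_pow, show (n:ℝ)/((n:ℝ)+1) * (1+(n:ℝ)⁻¹) = 1 by field_simp]
    exact one_pow _
  have key2 : hSeq α (q+2) n
      = ((n:ℝ)/((n:ℝ)+1))^(q+2) *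
        ((∑ ℓ ∈ range (q+3), dd (q+2) ℓ * ((1-2*α)*(n:ℝ)⁻¹)^(q+2-ℓ))
          + α * (n:ℝ)⁻¹ *
            (∑ ℓ ∈ Finset.Icc 1 (q+2), ee (q+2) ℓ * ((1-2*α)*(n:ℝ)⁻¹)^(q+2-ℓ))
          - (1+(n:ℝ)⁻¹)^(q+2)) := by
    rw [mul_sub, hone]
    linarith [key]
  rw [key2, key1 α q ((n:ℝ)⁻¹)]

lemma hSeq_sq_tendsto (α : ℝ) (hα₂ : α < 1/2) (q : ℕ) :
    Tendsto (fun n : ℕ => hSeq α (q+2) n * (n:ℝ)^2) atTop (𝓝 (BB α (q+2) 2)) := by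
  have h1 : Tendsto (fun n : ℕ => (n:ℝ)⁻¹) atTop (𝓝 0) := tendsto_inv_atTop_nhds_zero_nat
  have hφ : Continuous (fun x : ℝ => ∑ i ∈ range (q+1), BB α (q+2) (i+2) * x^i) :=
    continuous_finset_sum _ fun i _ => (continuous_const.mul (continuous_pow i))
  have h2 : Tendsto (fun n : ℕ => ∑ i ∈ range (q+1), BB α (q+2) (i+2) * ((n:ℝ)⁻¹)^i)
      atTop (𝓝 (∑ i ∈ range (q+1), BB α (q+2) (i+2) * (0:ℝ)^i)) := (hφ.tendsto 0).comp h1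
  have h3 : (∑ i ∈ range (q+1), BB α (q+2) (i+2) * (0:ℝ)^i) = BB α (q+2) 2 := by
    rw [Finset.sum_range_succ' (fun i => BB α (q+2) (i+2) * (0:ℝ)^i) q]
    simp
  rw [h3] at h2
  have hbase : Tendsto (fun n : ℕ => (n:ℝ)/((n:ℝ)+1)) atTop (𝓝 1) := by
    have h4 : Tendsto (fun n : ℕ => ((1:ℝ) + (n:ℝ)⁻¹)⁻¹) atTop (𝓝 ((1+0:ℝ))⁻¹) :=
      (tendsto_const_nhds.add h1).inv₀ (by norm_num)
    rw [show ((1+0:ℝ))⁻¹ = 1 by norm_num] at h4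
    apply h4.congr'
    filter_upwards [eventually_ge_atTop 1] with n hn
    have hnp : (0:ℝ) < (n:ℝ) := by exact_mod_cast hn
    field_simp
  have h5 : Tendsto (fun n : ℕ => ((n:ℝ)/((n:ℝ)+1))^(q+2)) atTop (𝓝 1) := by
    simpa using hbase.pow (q+2)
  have h6 := h5.mul h2
  rw [one_mul] at h6
  apply h6.congr'
  filter_upwards [eventually_ge_atTop 1] with n hn
  have hnp : (0:ℝ) < (n:ℝ) := by exact_mod_cast hn
  rw [hSeq_eq α hα₂ q n hn]
  field_simp

lemma sum_ite_Ico (J : ℕ) (f : ℕ → ℝ) (n : ℕ) :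
    ∑ j ∈ range n, (if j < J then 0 else f j) = ∑ j ∈ Finset.Ico J n, f j := by
  induction n with
  | zero => simp
  | succ n ih =>
    rw [Finset.sum_range_succ, ih]
    by_cases h : J ≤ n
    · rw [Finset.sum_Ico_succ_top h, if_neg (by omega)]
    · rw [if_pos (by omega), add_zero, Finset.Ico_eq_empty (by omega),
        Finset.Ico_eq_empty (by omega)]

lemma tendsto_sum_div_sum (u w : ℕ → ℝ) (hw0 : ∀ j, 0 ≤ w j)
    (hwne : ∀ᶠ j in atTop, w j ≠ 0)
    (hdiv : Tendsto (fun n => ∑ j ∈ range n, w j) atTop atTop)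
    {L : ℝ} (hratio : Tendsto (fun j => u j / w j) atTop (𝓝 L)) :
    Tendsto (fun n => (∑ j ∈ range n, u j) / (∑ j ∈ range n, w j)) atTop (𝓝 L) := by
  have h1 : (fun j => u j - L * w j) =o[atTop] w := by
    rw [isLittleO_iff_tendsto' (hwne.mono fun j hj h => absurd h hj)]
    have h0 : Tendsto (fun j => u j / w j - L) atTop (𝓝 (L - L)) := hratio.sub_const L
    rw [sub_self] at h0
    apply h0.congr'
    filter_upwards [hwne] with j hj
    field_simp
  have h2 := h1.sum_range hw0 hdiv
  have hev : ∀ᶠ n in atTop, (∑ j ∈ range n, w j) ≠ 0 :=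
    (hdiv.eventually_ge_atTop 1).mono fun n hn => by linarith
  have h3 : Tendsto (fun n => (∑ j ∈ range n, (u j - L * w j)) / (∑ j ∈ range n, w j))
      atTop (𝓝 0) := by
    rw [← isLittleO_iff_tendsto' (hev.mono fun n hn h => absurd h hn)]
    exact h2
  have h4 := h3.add_const L
  rw [zero_add] at h4
  apply h4.congr'
  filter_upwards [hev] with n hn
  rw [Finset.sum_sub_distrib, ← Finset.mul_sum]
  field_simp
  ring

lemma slope_rpow (r : ℝ) :
    Tendsto (fun j : ℕ => ((j:ℝ)+1)^r/(j:ℝ)^r - 1) atTop (𝓝 0) := by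
  have hcont : Tendsto (fun j : ℕ => (1:ℝ) + (j:ℝ)⁻¹) atTop (𝓝 1) := by
    simpa using tendsto_const_nhds.add (tendsto_inv_atTop_nhds_zero_nat (𝕜 := ℝ))
  have h2 : Tendsto (fun j : ℕ => ((1:ℝ) + (j:ℝ)⁻¹)^r) atTop (𝓝 1) := by
    simpa using hcont.rpow_const (Or.inl one_ne_zero)
  have := h2.sub_const 1
  rw [sub_self] at this
  apply this.congr'
  filter_upwards [eventually_ge_atTop 1] with j hj
  have hjp : (0:ℝ) < (j:ℝ) := by exact_mod_cast hj
  rw [← Real.div_rpow (by positivity) hjp.le]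
  congr 2
  field_simp

/-- slope limit for rpow at 1, composed with 1 + 1/j -/
lemma rpow_ratio (r : ℝ) (hr : 0 < r) :
    Tendsto (fun j : ℕ => (((j:ℝ)+1)^r - (j:ℝ)^r) / ((j:ℝ)^(r-1))) atTop (𝓝 r) := by
  have hd : HasDerivAt (fun z : ℝ => z ^ r) (r * (1:ℝ) ^ (r-1)) 1 :=
    Real.hasDerivAt_rpow_const (Or.inl one_ne_zero)
  rw [Real.one_rpow, mul_one] at hd
  have hslope := hasDerivAt_iff_tendsto_slope.mp hd
  have hcomp : Tendsto (fun j : ℕ => (1:ℝ) + (j:ℝ)⁻¹) atTop (𝓝[≠] 1) := by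
    rw [tendsto_nhdsWithin_iff]
    constructor
    · simpa using tendsto_const_nhds.add (tendsto_inv_atTop_nhds_zero_nat (𝕜 := ℝ))
    · filter_upwards [eventually_ge_atTop 1] with j hj
      have hjp : (0:ℝ) < (j:ℝ) := by exact_mod_cast hj
      have : (0:ℝ) < (j:ℝ)⁻¹ := by positivity
      simp only [Set.mem_compl_iff, Set.mem_singleton_iff]
      intro h
      nlinarith [h]
  have h2 := hslope.comp hcomp
  apply h2.congr'
  filter_upwards [eventually_ge_atTop 1] with j hj
  have hjp : (0:ℝ) < (j:ℝ) := by exact_mod_cast hj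
  have hj1 : (0:ℝ) < 1 + (j:ℝ)⁻¹ := by positivity
  simp only [Function.comp_apply, slope, vsub_eq_sub, Real.one_rpow]
  rw [add_sub_cancel_left]
  have key : ((j:ℝ) + 1)^r = (j:ℝ)^r * (1 + (j:ℝ)⁻¹)^r := by
    rw [← Real.mul_rpow hjp.le hj1.le]
    congr 1
    field_simp
  rw [key]
  rw [show (j:ℝ)^(r-1) = (j:ℝ)^r * ((j:ℝ)^(1:ℝ))⁻¹ by
    rw [← Real.rpow_neg hjp.le, ← Real.rpow_add hjp]; ring_nf]
  rw [Real.rpow_one]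
  have hjr : (0:ℝ) < (j:ℝ)^r := Real.rpow_pos_of_pos hjp r
  field_simp
  ring

lemma log_approx (y : ℝ) (hy : |y| ≤ 1/2) : |Real.log (1+y) - y| ≤ 2*y^2 := by
  have h1 : |(-y)| < 1 := by rw [abs_neg]; linarith
  have h := Real.abs_log_sub_add_sum_range_le h1 1
  simp only [Finset.sum_range_one, pow_one, Nat.cast_zero, zero_add, div_one,
    sub_neg_eq_add, abs_neg] at h
  have h2 : |Real.log (1+y) - y| ≤ |y|^(1+1)/(1-|y|) := by
    rw [show Real.log (1+y) - y = -y + Real.log (1+y) by ring]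
    exact h
  have h3 : |y|^(1+1) = y^2 := by rw [show 1+1 = 2 from rfl, sq_abs]
  rw [h3] at h2
  calc |Real.log (1+y) - y| ≤ y^2/(1-|y|) := h2
  _ ≤ 2*y^2 := by
      rw [div_le_iff₀ (by linarith : (0:ℝ) < 1-|y|)]
      nlinarith [sq_nonneg y, abs_nonneg y,
        mul_nonneg (sq_nonneg y) (by linarith : (0:ℝ) ≤ 1-2*|y|)]

lemma prod_Ico_div (J n : ℕ) (hJ : 1 ≤ J) (h : J ≤ n) :
    ∏ j ∈ Finset.Ico J n, ((j:ℝ)/((j:ℝ)+1)) = (J:ℝ)/(n:ℝ) := by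
  induction n, h using Nat.le_induction with
  | base =>
    rw [Finset.Ico_self, Finset.prod_empty]
    have : (0:ℝ) < (J:ℝ) := by exact_mod_cast hJ
    rw [div_self this.ne']
  | succ n hn ih =>
    rw [Finset.prod_Ico_succ_top hn, ih]
    have hn0 : (0:ℝ) < (n:ℝ) := by
      have : 1 ≤ n := le_trans hJ hn
      exact_mod_cast this
    push_cast
    field_simp

lemma sum_Ico_log (J n : ℕ) (h : J ≤ n) :
    ∑ j ∈ Finset.Ico J n, (Real.log ((j:ℝ)+1) - Real.log j)
      = Real.log n - Real.log J := by
  induction n, h using Nat.le_induction with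
  | base => simp
  | succ n hn ih =>
    rw [Finset.sum_Ico_succ_top hn, ih]
    push_cast
    ring

lemma j0_spec (δ : ℝ) (j : ℕ) (hj : 1 ≤ j) (h : δ = -(j:ℝ)) : j0 δ = j := by
  have hex : ∃ k : ℕ, 1 ≤ k ∧ δ = -(k : ℝ) := ⟨j, hj, h⟩
  rw [j0, dif_pos hex]
  obtain ⟨h1, h2⟩ := hex.choose_spec
  have h3 : -((hex.choose : ℕ) : ℝ) = -(j:ℝ) := by rw [← h2, h]
  exact_mod_cast neg_injective h3

lemma gSeq_ne (α : ℝ) (m j : ℕ) (hj : j0 (2*(m:ℝ)*α) + 1 ≤ j) : gSeq α m j ≠ 0 := by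
  have hj1 : 1 ≤ j := by omega
  have hjp : (0:ℝ) < (j:ℝ) := by exact_mod_cast hj1
  unfold gSeq
  apply mul_ne_zero
  · exact pow_ne_zero _ (div_ne_zero hjp.ne' (by positivity))
  · intro h
    have h2 : 2*(m:ℝ)*α = -(j:ℝ) := by
      field_simp at h
      linarith
    have := j0_spec _ j hj1 h2
    omega

lemma gBar_ne (α : ℝ) (m n : ℕ) : gBar α m n ≠ 0 :=
  Finset.prod_ne_zero_iff.mpr fun j hj => gSeq_ne α m j (Finset.mem_Ico.mp hj).1

lemma gBar_tendsto (α : ℝ) (hα₁ : -1 < α) (hα₂ : α < 1/2) (m : ℕ) (hm : 1 ≤ m) :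
    ∃ C : ℝ, C ≠ 0 ∧
      Tendsto (fun n : ℕ => gBar α m n * (n:ℝ) ^ ((m:ℝ)*(1-2*α))) atTop (𝓝 C) := by
  set β : ℝ := 2*(m:ℝ)*α with hβ
  set J : ℕ := max (j0 β + 1) (2*m+1) with hJdef
  have hm1 : (1:ℝ) ≤ (m:ℝ) := by exact_mod_cast hm
  have hβlb : -(2*(m:ℝ)) < β := by nlinarith
  have hJ1 : 1 ≤ J := by omega
  have hJj0 : j0 β + 1 ≤ J := le_max_left _ _
  have hJm : 2*m+1 ≤ J := le_max_right _ _
  have hpos : ∀ j : ℕ, J ≤ j → 0 < 1 + β/(j:ℝ) := by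
    intro j hj
    have hj2m : (2*(m:ℝ)+1) ≤ (j:ℝ) := by exact_mod_cast le_trans hJm hj
    have hjp : (0:ℝ) < (j:ℝ) := by linarith
    have h2 : 0 < ((j:ℝ) + β)/(j:ℝ) := div_pos (by linarith) hjp
    calc (0:ℝ) < ((j:ℝ) + β)/(j:ℝ) := h2
    _ = 1 + β/(j:ℝ) := by field_simp
  set t : ℕ → ℝ := fun j => Real.log (1+β/(j:ℝ)) - β*(Real.log ((j:ℝ)+1) - Real.log j)
    with htdef
  have hsum : Summable (fun j => if j < J then 0 else t j) := by
    apply Summable.of_norm_bounded_eventually_nat (g := fun j => (2*β^2+2*|β|) * ((j:ℝ)^2)⁻¹)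
    · have := (Real.summable_one_div_nat_pow (p := 2)).mpr one_lt_two
      simpa [one_div] using this.mul_left (2*β^2+2*|β|)
    · have hceil : ∀ᶠ j : ℕ in atTop, (max 2 ⌈2*|β|⌉₊ : ℕ) ≤ j := eventually_ge_atTop _
      filter_upwards [hceil, eventually_ge_atTop J] with j hj hjJ
      have hj2 : (2:ℝ) ≤ (j:ℝ) := by
        have : (2:ℕ) ≤ j := le_trans (le_max_left _ _) hj
        exact_mod_cast this
      have hjβ : 2*|β| ≤ (j:ℝ) := by
        have h1 : (⌈2*|β|⌉₊ : ℕ) ≤ j := le_trans (le_max_right _ _) hj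
        calc 2*|β| ≤ (⌈2*|β|⌉₊ : ℝ) := Nat.le_ceil _
        _ ≤ (j:ℝ) := by exact_mod_cast h1
      have hjp : (0:ℝ) < (j:ℝ) := by linarith
      rw [if_neg (by omega)]
      have hlog : Real.log ((j:ℝ)+1) - Real.log j = Real.log (1+(j:ℝ)⁻¹) := by
        rw [← Real.log_div (by positivity) hjp.ne']
        congr 1
        field_simp
      have e1 : |Real.log (1+β/(j:ℝ)) - β/(j:ℝ)| ≤ 2*(β/(j:ℝ))^2 := by
        apply log_approx
        rw [abs_div, abs_of_pos hjp, div_le_iff₀ hjp]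
        linarith
      have e2 : |Real.log (1+(j:ℝ)⁻¹) - (j:ℝ)⁻¹| ≤ 2*((j:ℝ)⁻¹)^2 := by
        apply log_approx
        rw [abs_of_pos (by positivity : (0:ℝ) < (j:ℝ)⁻¹)]
        rw [inv_le_comm₀ (by linarith) (by norm_num)]
        linarith
      have hteq : t j = (Real.log (1+β/(j:ℝ)) - β/(j:ℝ))
          - β*(Real.log (1+(j:ℝ)⁻¹) - (j:ℝ)⁻¹) := by
        rw [htdef]
        simp only
        rw [hlog]
        field_simp
        ring
      rw [Real.norm_eq_abs, hteq]
      calc |Real.log (1+β/(j:ℝ)) - β/(j:ℝ) - β*(Real.log (1+(j:ℝ)⁻¹) - (j:ℝ)⁻¹)|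
          ≤ |Real.log (1+β/(j:ℝ)) - β/(j:ℝ)| + |β| * |Real.log (1+(j:ℝ)⁻¹) - (j:ℝ)⁻¹| := by
            rw [← abs_mul]
            exact abs_sub _ _
      _ ≤ 2*(β/(j:ℝ))^2 + |β| * (2*((j:ℝ)⁻¹)^2) := by
            gcongr
      _ ≤ (2*β^2+2*|β|) * ((j:ℝ)^2)⁻¹ := by
            rw [div_pow]
            have hj2p : (0:ℝ) < (j:ℝ)^2 := by positivity
            rw [div_eq_mul_inv]
            have : ((j:ℝ)⁻¹)^2 = ((j:ℝ)^2)⁻¹ := by rw [← inv_pow]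
            rw [this]
            have hb2 : (0:ℝ) ≤ β^2 := sq_nonneg β
            nlinarith [inv_pos.mpr hj2p]
  have hpartial := hsum.hasSum.tendsto_sum_nat
  set S : ℝ := ∑' j, (if j < J then 0 else t j) with hSdef
  set Q : ℕ → ℝ := fun n => ∏ j ∈ Finset.Ico J n, (1 + β/(j:ℝ)) with hQdef
  have hQpos : ∀ n, 0 < Q n := fun n =>
    Finset.prod_pos fun j hj => hpos j (Finset.mem_Ico.mp hj).1
  have hlim : Tendsto (fun n : ℕ => Real.log (Q n) - β * Real.log n) atTop
      (𝓝 (S - β * Real.log J)) := by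
    have h2 := hpartial.sub_const (β * Real.log J)
    apply h2.congr'
    filter_upwards [eventually_ge_atTop J] with n hn
    rw [sum_ite_Ico]
    have hlogQ : Real.log (Q n) = ∑ j ∈ Finset.Ico J n, Real.log (1+β/(j:ℝ)) :=
      Real.log_prod fun j hj => (hpos j (Finset.mem_Ico.mp hj).1).ne'
    rw [htdef]
    simp only
    rw [Finset.sum_sub_distrib, ← Finset.mul_sum, sum_Ico_log J n hn, hlogQ]
    ring
  have hQ : Tendsto (fun n : ℕ => Q n * (n:ℝ)^(-β)) atTop
      (𝓝 (Real.exp (S - β * Real.log J))) := by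
    have h3 := (Real.continuous_exp.tendsto _).comp hlim
    apply h3.congr'
    filter_upwards [eventually_ge_atTop (max J 1)] with n hn
    have hnp : (0:ℝ) < (n:ℝ) := by
      have : 1 ≤ n := le_trans (le_max_right _ _) hn
      exact_mod_cast this
    simp only [Function.comp_apply]
    rw [Real.exp_sub, Real.exp_log (hQpos n), Real.rpow_def_of_pos hnp]
    rw [show Real.log (n:ℝ) * (-β) = -(β * Real.log n) by ring, Real.exp_neg]
    field_simp
  set A : ℝ := ∏ j ∈ Finset.Ico (j0 β + 1) J, gSeq α m j with hAdef
  have hA : A ≠ 0 :=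
    Finset.prod_ne_zero_iff.mpr fun j hj => gSeq_ne α m j (Finset.mem_Ico.mp hj).1
  have hJp : (0:ℝ) < (J:ℝ) := by exact_mod_cast hJ1
  refine ⟨A * (J:ℝ)^m * Real.exp (S - β * Real.log J),
    mul_ne_zero (mul_ne_zero hA (pow_ne_zero _ hJp.ne')) (Real.exp_ne_zero _), ?_⟩
  have h4 := (tendsto_const_nhds (x := A * (J:ℝ)^m)).mul hQ
  rw [show A * (J:ℝ)^m * Real.exp (S - β * Real.log J)
    = A * (J:ℝ)^m * (Real.exp (S - β * Real.log J)) by ring] at h4 ⊢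
  apply h4.congr'
  filter_upwards [eventually_ge_atTop (max J 1)] with n hn
  have hnJ : J ≤ n := le_trans (le_max_left _ _) hn
  have hn1 : 1 ≤ n := le_trans (le_max_right _ _) hn
  have hnp : (0:ℝ) < (n:ℝ) := by exact_mod_cast hn1
  have hsplit : gBar α m n = A * ∏ j ∈ Finset.Ico J n, gSeq α m j := by
    rw [hAdef, Finset.prod_Ico_consecutive _ hJj0 hnJ]
    rfl
  have hgprod : ∏ j ∈ Finset.Ico J n, gSeq α m j = ((J:ℝ)/(n:ℝ))^m * Q n := by
    unfold gSeq
    rw [Finset.prod_mul_distrib, Finset.prod_pow, prod_Ico_div J n hJ1 hnJ]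
  have hp : (n:ℝ)^((m:ℝ)*(1-2*α)) = (n:ℝ)^m * (n:ℝ)^(-β) := by
    rw [← Real.rpow_natCast (n:ℝ) m, ← Real.rpow_add hnp]
    congr 1
    rw [hβ]
    ring
  rw [hsplit, hgprod, hp, div_pow]
  have hnm : ((n:ℝ))^m ≠ 0 := pow_ne_zero _ hnp.ne'
  field_simp

lemma sum_rpow_asymp (v : ℕ → ℝ) (r : ℝ) (hr : 0 < r) {L : ℝ}
    (hv : Tendsto (fun j : ℕ => v j / (j:ℝ)^(r-1)) atTop (𝓝 L)) :
    Tendsto (fun n : ℕ => (∑ j ∈ range n, v j) / (n:ℝ)^r) atTop (𝓝 (L/r)) := by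
  set w : ℕ → ℝ := fun j => ((j:ℝ)+1)^r - (j:ℝ)^r with hwdef
  have hw0 : ∀ j, 0 ≤ w j := fun j => by
    have := Real.rpow_le_rpow (by positivity : (0:ℝ) ≤ (j:ℝ))
      (by linarith : (j:ℝ) ≤ (j:ℝ)+1) hr.le
    simp only [hwdef]
    linarith
  have hwpos : ∀ j : ℕ, 1 ≤ j → 0 < w j := fun j hj => by
    have hjp : (0:ℝ) < (j:ℝ) := by exact_mod_cast hj
    have := Real.rpow_lt_rpow (by positivity : (0:ℝ) ≤ (j:ℝ))
      (by linarith : (j:ℝ) < (j:ℝ)+1) hr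
    simp only [hwdef]
    linarith
  have hwsum : ∀ n : ℕ, ∑ j ∈ range n, w j = (n:ℝ)^r := by
    intro n
    have h := Finset.sum_range_sub (fun j : ℕ => ((j:ℕ):ℝ)^r) n
    simp only [Nat.cast_zero, Real.zero_rpow hr.ne', sub_zero, Nat.cast_add,
      Nat.cast_one] at h
    rw [← h]
  have hwne : ∀ᶠ j : ℕ in atTop, w j ≠ 0 :=
    (eventually_ge_atTop 1).mono fun j hj => (hwpos j hj).ne'
  have hdiv : Tendsto (fun n : ℕ => ∑ j ∈ range n, w j) atTop atTop := by
    have := (tendsto_rpow_atTop hr).comp tendsto_natCast_atTop_atTop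
    apply this.congr
    intro n
    rw [hwsum]
    rfl
  have hratio : Tendsto (fun j : ℕ => v j / w j) atTop (𝓝 (L/r)) := by
    have h2 := hv.div (rpow_ratio r hr) hr.ne'
    apply h2.congr'
    filter_upwards [eventually_ge_atTop 1] with j hj
    have hjp : (0:ℝ) < (j:ℝ) := by exact_mod_cast hj
    have hjr : (j:ℝ)^(r-1) ≠ 0 := (Real.rpow_pos_of_pos hjp _).ne'
    have hwj : (((j:ℝ)+1)^r - (j:ℝ)^r) ≠ 0 := (hwpos j hj).ne'
    simp only [Pi.div_apply]
    field_simp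
    simp only [hwdef]
    field_simp
  have := tendsto_sum_div_sum v w hw0 hwne hdiv hratio
  apply this.congr
  intro n
  rw [hwsum]

lemma log_ratio : Tendsto (fun j : ℕ =>
    (Real.log ((j:ℝ)+1) - Real.log j) * (j:ℝ)) atTop (𝓝 1) := by
  have hd : HasDerivAt Real.log (1:ℝ) 1 := by
    have := Real.hasDerivAt_log one_ne_zero
    rwa [inv_one] at this
  have hslope := hasDerivAt_iff_tendsto_slope.mp hd
  have hcomp : Tendsto (fun j : ℕ => (1:ℝ) + (j:ℝ)⁻¹) atTop (𝓝[≠] 1) := by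
    rw [tendsto_nhdsWithin_iff]
    constructor
    · simpa using tendsto_const_nhds.add (tendsto_inv_atTop_nhds_zero_nat (𝕜 := ℝ))
    · filter_upwards [eventually_ge_atTop 1] with j hj
      have hjp : (0:ℝ) < (j:ℝ) := by exact_mod_cast hj
      have h2 : (0:ℝ) < (j:ℝ)⁻¹ := by positivity
      simp only [Set.mem_compl_iff, Set.mem_singleton_iff]
      intro h
      nlinarith [h]
  have h2 := hslope.comp hcomp
  apply h2.congr'
  filter_upwards [eventually_ge_atTop 1] with j hj
  have hjp : (0:ℝ) < (j:ℝ) := by exact_mod_cast hj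
  simp only [Function.comp_apply, slope, vsub_eq_sub, Real.log_one]
  rw [add_sub_cancel_left, sub_zero]
  have hlog : Real.log ((j:ℝ)+1) - Real.log j = Real.log (1+(j:ℝ)⁻¹) := by
    rw [← Real.log_div (by positivity) hjp.ne']
    congr 1
    field_simp
  rw [hlog]
  field_simp
  ring

lemma sum_log_asymp (v : ℕ → ℝ) {L : ℝ}
    (hv : Tendsto (fun j : ℕ => v j * (j:ℝ)) atTop (𝓝 L)) :
    Tendsto (fun n : ℕ => (∑ j ∈ range n, v j) / Real.log n) atTop (𝓝 L) := by
  set w : ℕ → ℝ := fun j => Real.log ((j:ℝ)+1) - Real.log j with hwdef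
  have hw0 : ∀ j, 0 ≤ w j := by
    intro j
    simp only [hwdef]
    rcases Nat.eq_zero_or_pos j with h | h
    · subst h; simp
    · have hjp : (0:ℝ) < (j:ℝ) := by exact_mod_cast h
      have := Real.log_le_log hjp (by linarith : (j:ℝ) ≤ (j:ℝ)+1)
      linarith
  have hwpos : ∀ j : ℕ, 1 ≤ j → 0 < w j := fun j hj => by
    have hjp : (0:ℝ) < (j:ℝ) := by exact_mod_cast hj
    have := Real.log_lt_log hjp (by linarith : (j:ℝ) < (j:ℝ)+1)
    simp only [hwdef]
    linarith
  have hwsum : ∀ n : ℕ, ∑ j ∈ range n, w j = Real.log n := by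
    intro n
    have h := Finset.sum_range_sub (fun j : ℕ => Real.log ((j:ℕ):ℝ)) n
    simp only [Nat.cast_zero, Real.log_zero, sub_zero, Nat.cast_add, Nat.cast_one] at h
    rw [← h]
  have hwne : ∀ᶠ j : ℕ in atTop, w j ≠ 0 :=
    (eventually_ge_atTop 1).mono fun j hj => (hwpos j hj).ne'
  have hdiv : Tendsto (fun n : ℕ => ∑ j ∈ range n, w j) atTop atTop := by
    have := Real.tendsto_log_atTop.comp tendsto_natCast_atTop_atTop
    apply this.congr
    intro n
    rw [hwsum]
    rfl
  have hratio : Tendsto (fun j : ℕ => v j / w j) atTop (𝓝 L) := by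
    have h2 := hv.div log_ratio one_ne_zero
    rw [div_one] at h2
    apply h2.congr'
    filter_upwards [eventually_ge_atTop 1] with j hj
    have hjp : (0:ℝ) < (j:ℝ) := by exact_mod_cast hj
    have hwj : (Real.log ((j:ℝ)+1) - Real.log j) ≠ 0 := (hwpos j hj).ne'
    simp only [Pi.div_apply]
    field_simp
    simp only [hwdef]
    field_simp
  have := tendsto_sum_div_sum v w hw0 hwne hdiv hratio
  apply this.congr
  intro n
  rw [hwsum]

end S16

open Finset Topology in
/-- Lemma 3: asymptotics of `H_n^{(2m)}` for `m ≥ 2`: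
(i) if `-1 < α ≤ 0` then `H_n^{(2m)} ~ ((1-4α)c_{2m}/(m(1-2α)-1)) n⁻¹`,
where `c_{2m} = (m(m-1)/2)·c(α)` and `c(α) = -2(2α²+1)/(3(1-4α))`;
(ii) if `0 < α < 1/2` then `H_n^{(2m)} = o(n^{-(1-2α)})`. -/
theorem stmt_16 (α : ℝ) (hα₁ : -1 < α) (hα₂ : α < 1 / 2) (m : ℕ) (hm : 2 ≤ m) :
    (α ≤ 0 →
      (fun n : ℕ => HSeq α m n) ~[atTop]
        fun n : ℕ =>
          (1 - 4 * α) * ((m : ℝ) * ((m : ℝ) - 1) / 2 *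
              (-(2 * (2 * α ^ 2 + 1)) / (3 * (1 - 4 * α)))) /
            ((m : ℝ) * (1 - 2 * α) - 1) * (n : ℝ)⁻¹) ∧
    (0 < α →
      (fun n : ℕ => HSeq α m n) =o[atTop] fun n : ℕ => (n : ℝ) ^ (-(1 - 2 * α))) := by
  obtain ⟨q, rfl⟩ : ∃ q, m = q + 2 := ⟨m - 2, by omega⟩
  obtain ⟨C, hC, hCt⟩ := S16.gBar_tendsto α hα₁ hα₂ (q+2) (by omega)
  have hhts := S16.hSeq_sq_tendsto α hα₂ q
  set aα : ℝ := S16.BB α (q+2) 2 with haα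
  set p : ℝ := ((q+2:ℕ):ℝ)*(1-2*α) with hpdef
  set J₀ : ℕ := j0 (2*((q+2:ℕ):ℝ)*α) + 1 with hJ₀
  set u : ℕ → ℝ := fun j => if j < J₀ then 0 else hSeq α (q+2) j / gBar α (q+2) (j+1)
    with hu
  have hHT : ∀ n, HSeq α (q+2) n = gBar α (q+2) n * ∑ j ∈ range n, u j := by
    intro n
    rw [hu, S16.sum_ite_Ico]
    rfl
  have haαval : aα = -(((q:ℝ)+2)*((q:ℝ)+1)) * (2*α^2+1)/3 := S16.BB2 α q
  have haαne : aα ≠ 0 := by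
    rw [haαval]
    have h0 : 0 < (((q:ℝ)+2)*((q:ℝ)+1)) * (2*α^2+1)/3 := by positivity
    linarith
  have hgne : ∀ k, gBar α (q+2) k ≠ 0 := S16.gBar_ne α (q+2)
  have hshift : Tendsto (fun j : ℕ => gBar α (q+2) (j+1) * (((j:ℝ)+1))^p) atTop (𝓝 C) := by
    have h1 := hCt.comp (tendsto_add_atTop_nat 1)
    apply h1.congr
    intro j
    simp only [Function.comp_apply]
    norm_num
  have hbase : Tendsto (fun j : ℕ => ((j:ℝ)+1)/(j:ℝ)) atTop (𝓝 1) := by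
    have h4 : Tendsto (fun j : ℕ => (1:ℝ) + (j:ℝ)⁻¹) atTop (𝓝 (1+0)) :=
      tendsto_const_nhds.add tendsto_inv_atTop_nhds_zero_nat
    rw [add_zero] at h4
    apply h4.congr'
    filter_upwards [eventually_ge_atTop 1] with j hj
    have hjp : (0:ℝ) < (j:ℝ) := by exact_mod_cast hj
    field_simp
  have honep : Tendsto (fun j : ℕ => (((j:ℝ)+1)/(j:ℝ))^p) atTop (𝓝 1) := by
    have h6 := hbase.rpow_const (p := p) (Or.inl one_ne_zero)
    simpa using h6
  have huratio : Tendsto (fun j : ℕ => u j / (j:ℝ)^(p-2)) atTop (𝓝 (aα/C)) := by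
    have h5 := (hhts.mul honep).div hshift hC
    rw [show S16.BB α (q+2) 2 * 1 / C = aα/C by rw [← haα]; ring] at h5
    apply h5.congr'
    filter_upwards [eventually_ge_atTop (max J₀ 1)] with j hj
    have hjJ : J₀ ≤ j := le_trans (le_max_left _ _) hj
    have hj1 : 1 ≤ j := le_trans (le_max_right _ _) hj
    have hjp : (0:ℝ) < (j:ℝ) := by exact_mod_cast hj1
    have hjpp : (0:ℝ) < (j:ℝ)^p := Real.rpow_pos_of_pos hjp _
    have hj1p : (0:ℝ) < ((j:ℝ)+1)^p := Real.rpow_pos_of_pos (by linarith) _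
    have hg1 : gBar α (q+2) (j+1) ≠ 0 := hgne _
    have hdivp : (((j:ℝ)+1)/(j:ℝ))^p = ((j:ℝ)+1)^p/(j:ℝ)^p :=
      Real.div_rpow (by linarith) hjp.le p
    have hsplit : ((j:ℝ))^(p-2) = (j:ℝ)^p * ((j:ℝ)^2)⁻¹ := by
      rw [show p-2 = p + (-2:ℝ) by ring, Real.rpow_add hjp]
      congr 1
      rw [show (-2:ℝ) = -((2:ℕ):ℝ) by norm_num, Real.rpow_neg hjp.le, Real.rpow_natCast]
    simp only [Pi.div_apply]
    rw [hu]
    simp only [if_neg (by omega : ¬ (j < J₀))]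
    rw [hdivp, hsplit]
    field_simp
  have hq2 : (2:ℝ) ≤ ((q+2:ℕ):ℝ) := by push_cast; linarith [Nat.cast_nonneg (α := ℝ) q]
  constructor
  · intro hα0
    have h1α : (1:ℝ) ≤ 1 - 2*α := by linarith
    have hp2 : (2:ℝ) ≤ p := by rw [hpdef]; nlinarith [hq2]
    have hr : 0 < p - 1 := by linarith
    have hv : Tendsto (fun j : ℕ => u j / (j:ℝ)^((p-1)-1)) atTop (𝓝 (aα/C)) := by
      simpa [show p-1-1 = p-2 by ring] using huratio
    have hT := S16.sum_rpow_asymp u (p-1) hr hv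
    have hHn : Tendsto (fun n : ℕ => HSeq α (q+2) n * (n:ℝ)) atTop
        (𝓝 (C * (aα/C/(p-1)))) := by
      have h6 := hCt.mul hT
      apply h6.congr'
      filter_upwards [eventually_ge_atTop 1] with n hn
      have hnp : (0:ℝ) < (n:ℝ) := by exact_mod_cast hn
      have hnr : (0:ℝ) < (n:ℝ)^(p-1) := Real.rpow_pos_of_pos hnp _
      have hex : (n:ℝ)^(p-1) * (n:ℝ) = (n:ℝ)^p := by
        have h7 := Real.rpow_add hnp (p-1) 1
        rw [Real.rpow_one, show p-1+1 = p by ring] at h7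
        exact h7.symm
      rw [hHT n, ← hex]
      field_simp
    set cst : ℝ := (1 - 4 * α) * (((q+2:ℕ):ℝ) * (((q+2:ℕ):ℝ) - 1) / 2 *
        (-(2 * (2 * α ^ 2 + 1)) / (3 * (1 - 4 * α)))) /
        (((q+2:ℕ):ℝ) * (1 - 2 * α) - 1) with hcst
    have h14 : (0:ℝ) < 1 - 4*α := by linarith
    have hd0 : (0:ℝ) < p - 1 := hr
    have hcval : cst = aα / (p-1) := by
      rw [hcst, haαval, hpdef]
      push_cast
      congr 1
      field_simp
      ring
    have hcne : cst ≠ 0 := by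
      rw [hcval]
      exact div_ne_zero haαne (by linarith)
    have hlimc : C * (aα/C/(p-1)) = cst := by
      rw [hcval]
      field_simp [hr.ne']
    rw [hlimc] at hHn
    have hev : ∀ᶠ n : ℕ in atTop, cst * (n:ℝ)⁻¹ ≠ 0 := by
      filter_upwards [eventually_ge_atTop 1] with n hn
      have hnp : (0:ℝ) < (n:ℝ) := by exact_mod_cast hn
      exact mul_ne_zero hcne (inv_ne_zero hnp.ne')
    rw [Asymptotics.isEquivalent_iff_tendsto_one hev]
    have h8 := hHn.div_const cst
    rw [div_self hcne] at h8
    apply h8.congr'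
    filter_upwards [eventually_ge_atTop 1] with n hn
    have hnp : (0:ℝ) < (n:ℝ) := by exact_mod_cast hn
    simp only [Pi.div_apply]
    field_simp
  · intro hα0
    have h2α : (0:ℝ) < 2*α := by linarith
    have h12α : (0:ℝ) < 1 - 2*α := by linarith
    have hqp : (0:ℝ) < ((q+2:ℕ):ℝ) := by positivity
    have hp0 : (0:ℝ) < p := by rw [hpdef]; exact mul_pos hqp h12α
    have hpq : 1 - 2*α < p := by rw [hpdef]; nlinarith [hq2]
    have hgz : ∀ᶠ n : ℕ in atTop, ((n:ℝ) ^ (-(1 - 2*α)) = 0 → HSeq α (q+2) n = 0) := by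
      filter_upwards [eventually_ge_atTop 1] with n hn
      have hnp : (0:ℝ) < (n:ℝ) := by exact_mod_cast hn
      intro h
      exact absurd h (Real.rpow_pos_of_pos hnp _).ne'
    rw [Asymptotics.isLittleO_iff_tendsto' hgz]
    suffices hsuf : Tendsto (fun n : ℕ => HSeq α (q+2) n * (n:ℝ)^(1-2*α)) atTop (𝓝 0) by
      apply hsuf.congr'
      filter_upwards [eventually_ge_atTop 1] with n hn
      have hnp : (0:ℝ) < (n:ℝ) := by exact_mod_cast hn
      rw [Real.rpow_neg hnp.le, div_inv_eq_mul]
    rcases lt_trichotomy p 1 with hp1 | hp1 | hp1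
    · -- p < 1 : summable case
      have hsummable : Summable u := by
        apply Summable.of_norm_bounded_eventually_nat (g := fun j => (|aα/C|+1) * (j:ℝ)^(p-2))
        · exact (Real.summable_nat_rpow.mpr (by linarith)).mul_left _
        · have hev2 := Metric.tendsto_nhds.mp huratio 1 one_pos
          filter_upwards [hev2, eventually_ge_atTop 1] with j hj hj1
          have hjp : (0:ℝ) < (j:ℝ) := by exact_mod_cast hj1
          have hjr : (0:ℝ) < (j:ℝ)^(p-2) := Real.rpow_pos_of_pos hjp _
          rw [Real.dist_eq] at hj
          have habs : |u j / (j:ℝ)^(p-2)| ≤ |aα/C| + 1 := by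
            calc |u j / (j:ℝ)^(p-2)|
                ≤ |u j / (j:ℝ)^(p-2) - aα/C| + |aα/C| := by
                  have := abs_sub_abs_le_abs_sub (u j / (j:ℝ)^(p-2)) (aα/C)
                  linarith [abs_nonneg (u j / (j:ℝ)^(p-2) - aα/C)]
            _ ≤ |aα/C| + 1 := by linarith
          have hueq : u j = (u j / (j:ℝ)^(p-2)) * (j:ℝ)^(p-2) := by
            field_simp
          rw [Real.norm_eq_abs, hueq, abs_mul, abs_of_pos hjr]
          exact mul_le_mul_of_nonneg_right habs hjr.le
      have hTlim := hsummable.hasSum.tendsto_sum_nat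
      have hnq : Tendsto (fun n : ℕ => (n:ℝ)^(1-2*α-p)) atTop (𝓝 0) := by
        have h10 := (tendsto_rpow_neg_atTop (by linarith : (0:ℝ) < p - (1-2*α))).comp
          tendsto_natCast_atTop_atTop
        apply h10.congr
        intro n
        simp only [Function.comp_apply]
        congr 1
        ring
      have h9 := (hCt.mul hTlim).mul hnq
      rw [mul_zero] at h9
      apply h9.congr'
      filter_upwards [eventually_ge_atTop 1] with n hn
      have hnp : (0:ℝ) < (n:ℝ) := by exact_mod_cast hn
      rw [hHT n]
      have hxx : (n:ℝ)^p * (n:ℝ)^(1-2*α-p) = (n:ℝ)^(1-2*α) := by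
        rw [← Real.rpow_add hnp]
        congr 1
        ring
      linear_combination (gBar α (q+2) n * ∑ j ∈ range n, u j) * hxx
    · -- p = 1 : log case
      have hv1 : Tendsto (fun j : ℕ => u j * (j:ℝ)) atTop (𝓝 (aα/C)) := by
        apply huratio.congr'
        filter_upwards [eventually_ge_atTop 1] with j hj
        have hjp : (0:ℝ) < (j:ℝ) := by exact_mod_cast hj
        rw [hp1, show (1:ℝ)-2 = -1 by norm_num, show (-1:ℝ) = -(1:ℝ) by norm_num,
          Real.rpow_neg hjp.le, Real.rpow_one, div_inv_eq_mul]
      have hT := S16.sum_log_asymp u hv1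
      have hlogn : Tendsto (fun n : ℕ => Real.log n * (n:ℝ)^(-(2*α))) atTop (𝓝 0) := by
        have h10 := (isLittleO_log_rpow_atTop h2α).tendsto_div_nhds_zero
        have h11 := h10.comp tendsto_natCast_atTop_atTop
        apply h11.congr'
        filter_upwards [eventually_ge_atTop 1] with n hn
        have hnp : (0:ℝ) < (n:ℝ) := by exact_mod_cast hn
        simp only [Function.comp_apply]
        rw [Real.rpow_neg hnp.le, div_eq_mul_inv]
      have h9 := (hCt.mul hT).mul hlogn
      rw [mul_zero] at h9
      apply h9.congr'
      filter_upwards [eventually_ge_atTop 2] with n hn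
      have hn1 : (1:ℝ) < (n:ℝ) := by exact_mod_cast (by omega : 1 < n)
      have hnp : (0:ℝ) < (n:ℝ) := by linarith
      have hlogne : Real.log n ≠ 0 := (Real.log_pos hn1).ne'
      rw [hHT n]
      have hxx : (n:ℝ)^p * (n:ℝ)^(-(2*α)) = (n:ℝ)^(1-2*α) := by
        rw [← Real.rpow_add hnp]
        congr 1
        rw [hp1]
        ring
      have hstep : gBar α (q+2) n * (n:ℝ)^p * ((∑ j ∈ range n, u j) / Real.log n) *
          (Real.log n * (n:ℝ)^(-(2*α)))
          = gBar α (q+2) n * (∑ j ∈ range n, u j) * ((n:ℝ)^p * (n:ℝ)^(-(2*α))) := by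
        field_simp
      rw [hstep, hxx]
    · -- p > 1
      have hr : (0:ℝ) < p - 1 := by linarith
      have hv : Tendsto (fun j : ℕ => u j / (j:ℝ)^((p-1)-1)) atTop (𝓝 (aα/C)) := by
        simpa [show p-1-1 = p-2 by ring] using huratio
      have hT := S16.sum_rpow_asymp u (p-1) hr hv
      have hn2α : Tendsto (fun n : ℕ => (n:ℝ)^(-(2*α))) atTop (𝓝 0) :=
        (tendsto_rpow_neg_atTop h2α).comp tendsto_natCast_atTop_atTop
      have h9 := (hCt.mul hT).mul hn2α
      rw [mul_zero] at h9
      apply h9.congr'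
      filter_upwards [eventually_ge_atTop 1] with n hn
      have hnp : (0:ℝ) < (n:ℝ) := by exact_mod_cast hn
      have hnr : (n:ℝ)^(p-1) ≠ 0 := (Real.rpow_pos_of_pos hnp _).ne'
      rw [hHT n]
      have hxx : (n:ℝ)^p / (n:ℝ)^(p-1) * (n:ℝ)^(-(2*α)) = (n:ℝ)^(1-2*α) := by
        rw [← Real.rpow_sub hnp, ← Real.rpow_add hnp]
        congr 1
        ring
      have hstep : gBar α (q+2) n * (n:ℝ)^p * ((∑ j ∈ range n, u j) / (n:ℝ)^(p-1)) *
          (n:ℝ)^(-(2*α))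
          = gBar α (q+2) n * (∑ j ∈ range n, u j) *
            ((n:ℝ)^p / (n:ℝ)^(p-1) * (n:ℝ)^(-(2*α))) := by
        field_simp
      rw [hstep, hxx]



end
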